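/- arXiv:alg-geom/9405013 — 3 statements merged into one kernel-verified Lean document; each statement's English description precedes it below -/
import Mathlib

section
/- Let A be a commutative ℚ-algebra and X a cosimplicial A-module. Then X^n decomposes canonically as X^n = ⊕_{m≥0} ⊕_{f: [m]→[n] ∈ Λ} f_*(N^m(X)), where Λ is the subcategory of the simplex category Δ generated by the cofaces δ^i: [n] → [n+1] with 0 ≤ i ≤ n (omitting the last coface δ^{n+1}), and N^m(X) = {x ∈ X^m | σ^j(x) = 0 for all codegeneracies σ^j} is the normalization. -/
open CategoryTheory

/-- The normalization `Nᵐ(X)` of a cosimplicial module: the intersection of the kernels of all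
codegeneracies, equivalently of all maps induced by non-invertible surjections in `Δ`. -/
def cosimplicialNormalization {A : Type} [CommRing A]
    (X : CosimplicialObject (ModuleCat A)) (m : ℕ) :
    Submodule A (X.obj (SimplexCategory.mk m)) :=
  ⨅ (l : ℕ) (g : SimplexCategory.mk m ⟶ SimplexCategory.mk l)
    (_ : l < m) (_ : Function.Surjective g.toOrderHom), LinearMap.ker (X.map g).hom

/-- The subcategory `Λ ⊆ Δ`: morphisms generated by the cofaces `δ^i : [n] → [n+1]` with
`0 ≤ i ≤ n`, i.e. omitting the last coface `δ^{n+1}`. -/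
inductive IsLambdaHom : ∀ {m n : ℕ}, (SimplexCategory.mk m ⟶ SimplexCategory.mk n) → Prop
  | id (m : ℕ) : IsLambdaHom (𝟙 (SimplexCategory.mk m))
  | comp {m n : ℕ} (f : SimplexCategory.mk m ⟶ SimplexCategory.mk n) (hf : IsLambdaHom f)
      (i : Fin (n + 2)) (hi : i ≠ Fin.last (n + 1)) :
      IsLambdaHom (f ≫ SimplexCategory.δ i)

/-!
Write `e_j = σ^j ≫ δ^j` on `X^{l+1}`. Each `𝟙 - e_j` kills the coface `δ^j` and the
codegeneracy `σ^j`, and the cosimplicial identities let the other cofaces `δ^i`, `i ≤ l`, and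
codegeneracies move past it, so `P = (𝟙 - e_l) ≫ ⋯ ≫ (𝟙 - e_0)` is a projection onto `N^{l+1}(X)`
that kills the images of all cofaces but the last; moreover `x - P x` lies in the span of these
images. By induction on `n` the summands therefore span `X^n`.

A morphism `f : [m] → [n]` of `Λ` is injective and keeps the last vertex, so it has a lower
adjoint `r_f : [n] → [m]` with `f ≫ r_f = 𝟙`. The map `P ∘ r_f^*` is a left inverse of `f_*` on
`N^m(X)`, and it kills `g_*(N^k(X))` for every other `g` in `Λ` whose vertex sum is at least that
of `f`: then `g ≫ r_f` is not the identity, so it is either not injective (and kills `N^k(X)`) or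
factors through a coface other than the last one (and is killed by `P`). This triangularity with
respect to the vertex sum gives the independence of the summands.
-/

theorem iSupIndep_of_triangular {R M ι : Type*} [Ring R] [AddCommGroup M] [Module R M]
    {N : ι → Type*} [∀ i, AddCommGroup (N i)] [∀ i, Module R (N i)]
    (V : ι → Submodule R M) (w : ι → ℕ) (T : ∀ i, M →ₗ[R] N i)
    (hT : ∀ i, ∀ v ∈ V i, T i v = 0 → v = 0)
    (hT_lower : ∀ i j, i ≠ j → w i ≤ w j → ∀ v ∈ V j, T i v = 0) : iSupIndep V := by
  classical
  refine iSupIndep_of_dfinsupp_lsum_injective V ((injective_iff_map_eq_zero _).2 fun v hv => ?_)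
  suffices key : ∀ k i, w i = k → v i = 0 from DFinsupp.ext fun i => key _ i rfl
  intro k
  induction k using Nat.strong_induction_on with
  | _ k ih =>
    intro i rfl
    have hsum := congrArg (T i)
      ((DFinsupp.sumAddHom_apply (fun j => (V j).subtype.toAddMonoidHom) v).symm.trans hv)
    rw [map_zero, map_dfinsuppSum, DFinsupp.sum, Finset.sum_eq_single i] at hsum
    · exact Subtype.ext (hT i _ (v i).2 hsum)
    · intro j _ hji
      rcases lt_or_ge (w j) (w i) with hlt | hle
      · rw [ih _ hlt j rfl, map_zero, map_zero]
      · exact hT_lower i j (Ne.symm hji) hle _ (v j).2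
    · intro hi
      rw [DFinsupp.notMem_support_iff.1 hi, map_zero, map_zero]

open Simplicial

namespace IsLambdaHom

theorem strictMono {m n : ℕ} {f : ⦋m⦌ ⟶ ⦋n⦌} (hf : IsLambdaHom f) :
    StrictMono f.toOrderHom := by
  induction hf with
  | id => exact strictMono_id
  | comp f _ i _ ih => exact (Fin.strictMono_succAbove i).comp ih

theorem map_last {m n : ℕ} {f : ⦋m⦌ ⟶ ⦋n⦌} (hf : IsLambdaHom f) :
    f.toOrderHom (Fin.last m) = Fin.last n := by
  induction hf with
  | id => rfl
  | comp f _ i hi ih =>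
    change i.succAbove (f.toOrderHom (Fin.last _)) = _
    rw [ih, Fin.succAbove_ne_last_last hi]

end IsLambdaHom

abbrev LambdaIndex (n : ℕ) : Type :=
  Σ m : ℕ, {f : ⦋m⦌ ⟶ ⦋n⦌ // IsLambdaHom f}

namespace SimplexCategory

variable {m n : ℕ}

def lowerAdjoint (f : ⦋m⦌ ⟶ ⦋n⦌) (hf : f.toOrderHom (Fin.last m) = Fin.last n) : ⦋n⦌ ⟶ ⦋m⦌ :=
  have hne (y : Fin (n + 1)) : (Finset.univ.filter fun x => y ≤ f.toOrderHom x).Nonempty :=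
    ⟨Fin.last m, by simp [hf, Fin.le_last]⟩
  mkHom
    { toFun y := (Finset.univ.filter fun x => y ≤ f.toOrderHom x).min' (hne y)
      monotone' a b hab := Finset.min'_subset _ fun x hx => by
        simp only [Finset.mem_filter_univ] at hx ⊢
        exact hab.trans hx }

theorem le_map_lowerAdjoint (f : ⦋m⦌ ⟶ ⦋n⦌) (hf : f.toOrderHom (Fin.last m) = Fin.last n)
    (y : Fin (n + 1)) : y ≤ f.toOrderHom ((lowerAdjoint f hf).toOrderHom y) :=
  (Finset.mem_filter_univ (p := fun x => y ≤ f.toOrderHom x) _).mp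
    (Finset.min'_mem _ ⟨Fin.last m, by simp [hf, Fin.le_last]⟩)

theorem lowerAdjoint_le_iff (f : ⦋m⦌ ⟶ ⦋n⦌) (hf : f.toOrderHom (Fin.last m) = Fin.last n)
    {x : Fin (m + 1)} {y : Fin (n + 1)} :
    (lowerAdjoint f hf).toOrderHom y ≤ x ↔ y ≤ f.toOrderHom x :=
  ⟨fun h => (le_map_lowerAdjoint f hf y).trans (f.toOrderHom.monotone h),
    fun h => Finset.min'_le _ x ((Finset.mem_filter_univ x).mpr h)⟩

theorem comp_lowerAdjoint {f : ⦋m⦌ ⟶ ⦋n⦌} (hf : f.toOrderHom (Fin.last m) = Fin.last n)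
    (hmono : StrictMono f.toOrderHom) : f ≫ lowerAdjoint f hf = 𝟙 _ := by
  ext x : 3
  exact le_antisymm ((lowerAdjoint_le_iff f hf).mpr le_rfl)
    (hmono.le_iff_le.mp (le_map_lowerAdjoint f hf _))

theorem lowerAdjoint_last {f : ⦋m⦌ ⟶ ⦋n⦌} (hf : f.toOrderHom (Fin.last m) = Fin.last n)
    (hmono : StrictMono f.toOrderHom) :
    (lowerAdjoint f hf).toOrderHom (Fin.last n) = Fin.last m := by
  apply hmono.injective
  rw [hf]
  exact le_antisymm (Fin.le_last _) (le_map_lowerAdjoint f hf _)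

def vertexSum (f : ⦋m⦌ ⟶ ⦋n⦌) : ℕ :=
  ∑ x, (f.toOrderHom x : ℕ)

theorem vertexSum_lt_of_le_of_ne {f g : ⦋m⦌ ⟶ ⦋n⦌} (hle : ∀ x, g.toOrderHom x ≤ f.toOrderHom x)
    (hne : g ≠ f) : vertexSum g < vertexSum f := by
  obtain ⟨x, hx⟩ : ∃ x, g.toOrderHom x ≠ f.toOrderHom x := by
    by_contra! h
    exact hne (Hom.ext _ _ (OrderHom.ext _ _ (funext h)))
  exact Finset.sum_lt_sum (fun x _ => hle x) ⟨x, Finset.mem_univ _, (hle x).lt_of_ne hx⟩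

theorem eq_of_comp_lowerAdjoint_eq_id {f : ⦋m⦌ ⟶ ⦋n⦌}
    (hf : f.toOrderHom (Fin.last m) = Fin.last n) {g : ⦋m⦌ ⟶ ⦋n⦌}
    (hg : g ≫ lowerAdjoint f hf = 𝟙 _) (hw : vertexSum f ≤ vertexSum g) : g = f := by
  by_contra hne
  refine not_le.mpr (vertexSum_lt_of_le_of_ne (fun x => ?_) hne) hw
  have hx : (lowerAdjoint f hf).toOrderHom (g.toOrderHom x) = x :=
    congrArg (fun φ : ⦋m⦌ ⟶ ⦋m⦌ => φ.toOrderHom x) hg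
  simpa only [hx] using le_map_lowerAdjoint f hf (g.toOrderHom x)

end SimplexCategory

namespace CategoryTheory.CosimplicialObject

open SimplexCategory (lowerAdjoint vertexSum)

variable {A : Type} [CommRing A] (X : CosimplicialObject (ModuleCat A))

theorem mem_cosimplicialNormalization_succ_iff {l : ℕ} (y : X ^⦋l + 1⦌) :
    y ∈ cosimplicialNormalization X (l + 1) ↔ ∀ i : Fin (l + 1), X.σ i y = 0 := by
  simp only [cosimplicialNormalization, Submodule.mem_iInf, LinearMap.mem_ker]
  refine ⟨fun hy i => hy l _ l.lt_succ_self (SimplexCategory.epi_iff_surjective.mp inferInstance),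
    fun hy l' g hl' _ => ?_⟩
  have hg : ¬ Function.Injective g.toOrderHom := fun hinj => by
    have := Fintype.card_le_of_injective _ hinj
    simp only [Fintype.card_fin, SimplexCategory.len_mk] at this
    omega
  obtain ⟨i, θ, rfl⟩ := SimplexCategory.eq_σ_comp_of_not_injective g hg
  rw [X.map_comp, ModuleCat.comp_apply]
  exact (congrArg _ (hy i)).trans (map_zero _)

theorem map_eq_zero_of_not_injective {k : ℕ} {y : X ^⦋k⦌}
    (hy : y ∈ cosimplicialNormalization X k) {Δ' : SimplexCategory} (g : ⦋k⦌ ⟶ Δ')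
    (hg : ¬ Function.Injective g.toOrderHom) : X.map g y = 0 := by
  cases k with
  | zero => exact absurd (fun a b _ => Subsingleton.elim (α := Fin 1) a b) hg
  | succ k =>
    obtain ⟨i, θ, rfl⟩ := SimplexCategory.eq_σ_comp_of_not_injective g hg
    rw [X.map_comp, ModuleCat.comp_apply]
    exact (congrArg _ ((X.mem_cosimplicialNormalization_succ_iff y).mp hy i)).trans (map_zero _)

def oneSubσδ {l : ℕ} (j : Fin (l + 1)) : X ^⦋l + 1⦌ ⟶ X ^⦋l + 1⦌ :=
  𝟙 _ - X.σ j ≫ X.δ j.castSucc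

theorem oneSubσδ_apply {l : ℕ} (j : Fin (l + 1)) (x : X ^⦋l + 1⦌) :
    X.oneSubσδ j x = x - X.δ j.castSucc (X.σ j x) :=
  rfl

theorem δ_comp_oneSubσδ_self {l : ℕ} (j : Fin (l + 1)) :
    X.δ j.castSucc ≫ X.oneSubσδ j = 0 := by
  rw [oneSubσδ, Preadditive.comp_sub, ← Category.assoc, δ_comp_σ_self, Category.id_comp,
    Category.comp_id, sub_self]

theorem oneSubσδ_comp_σ_self {l : ℕ} (j : Fin (l + 1)) :
    X.oneSubσδ j ≫ X.σ j = 0 := by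
  rw [oneSubσδ, Preadditive.sub_comp, Category.assoc, δ_comp_σ_self, Category.comp_id,
    Category.id_comp, sub_self]

theorem δ_comp_oneSubσδ_succ {l : ℕ} {i : Fin (l + 2)} {k : Fin (l + 1)}
    (h : i ≤ k.castSucc) :
    X.δ i.castSucc ≫ X.oneSubσδ k.succ = X.oneSubσδ k ≫ X.δ i.castSucc := by
  rw [oneSubσδ, oneSubσδ, Preadditive.comp_sub, Preadditive.sub_comp, ← Category.assoc,
    δ_comp_σ_of_le X h, Category.assoc, ← Fin.succ_castSucc, δ_comp_δ X h, Category.assoc,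
    Category.comp_id, Category.id_comp]

theorem oneSubσδ_castSucc_comp_σ_succ {l : ℕ} {j c : Fin (l + 1)} (h : j ≤ c) :
    X.oneSubσδ j.castSucc ≫ X.σ c.succ = X.σ c.succ ≫ X.oneSubσδ j := by
  rw [oneSubσδ, oneSubσδ, Preadditive.comp_sub, Preadditive.sub_comp, Category.assoc,
    δ_comp_σ_of_le X (by simpa using h), ← Category.assoc, σ_comp_σ X h, Category.assoc,
    Category.comp_id, Category.id_comp]

theorem oneSubσδ_apply_of_mem {l : ℕ} (j : Fin (l + 1)) {y : X ^⦋l + 1⦌}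
    (hy : y ∈ cosimplicialNormalization X (l + 1)) : X.oneSubσδ j y = y := by
  rw [oneSubσδ_apply, (X.mem_cosimplicialNormalization_succ_iff y).mp hy j, map_zero, sub_zero]

theorem sub_oneSubσδ_apply_mem_range {l : ℕ} (j : Fin (l + 1)) (x : X ^⦋l + 1⦌) :
    x - X.oneSubσδ j x ∈ LinearMap.range (X.δ j.castSucc).hom := by
  rw [oneSubσδ_apply, sub_sub_cancel]
  exact LinearMap.mem_range_self _ _

def partialNormalizer (l j : ℕ) (hj : j ≤ l) : X ^⦋l⦌ ⟶ X ^⦋l⦌ :=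
  match l, j, hj with
  | _, 0, _ => 𝟙 _
  | l + 1, j + 1, hj => X.oneSubσδ ⟨j, hj⟩ ≫ partialNormalizer (l + 1) j (Nat.le_of_succ_le hj)
  | 0, _ + 1, hj => absurd hj (Nat.not_succ_le_zero _)

theorem partialNormalizer_apply_of_mem {l : ℕ} {y : X ^⦋l⦌}
    (hy : y ∈ cosimplicialNormalization X l) (j : ℕ) (hj : j ≤ l) :
    X.partialNormalizer l j hj y = y := by
  cases l with
  | zero =>
    obtain rfl : j = 0 := by omega
    rfl
  | succ l =>
    induction j with
    | zero => rfl
    | succ j ih =>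
      rw [partialNormalizer, ModuleCat.comp_apply, X.oneSubσδ_apply_of_mem _ hy, ih]

theorem partialNormalizer_comp_σ {l j : ℕ} (k : Fin (l + 1)) (hjk : j ≤ k) {h₁ : j ≤ l + 1}
    {h₂ : j ≤ l} :
    X.partialNormalizer (l + 1) j h₁ ≫ X.σ k = X.σ k ≫ X.partialNormalizer l j h₂ := by
  induction j with
  | zero => rw [partialNormalizer, partialNormalizer, Category.id_comp, Category.comp_id]
  | succ j ih =>
    cases l with
    | zero => exact absurd (hjk.trans k.is_le) (Nat.not_succ_le_zero j)
    | succ l =>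
      obtain ⟨c, rfl⟩ : ∃ c, Fin.succ c = k := Fin.exists_succ_eq.mpr (by rintro rfl; simp at hjk)
      rw [partialNormalizer, partialNormalizer, Category.assoc, ih (by omega), ← Category.assoc,
        ← Category.assoc, show (⟨j, h₁⟩ : Fin (l + 2)) = Fin.castSucc ⟨j, h₂⟩ from rfl,
        X.oneSubσδ_castSucc_comp_σ_succ (Fin.le_def.mpr (by simpa using hjk))]

theorem partialNormalizer_comp_σ_eq_zero {l j : ℕ} (k : Fin (l + 1)) (hkj : k < j)
    {h : j ≤ l + 1} : X.partialNormalizer (l + 1) j h ≫ X.σ k = 0 := by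
  induction j with
  | zero => omega
  | succ j ih =>
    rw [partialNormalizer, Category.assoc]
    rcases (Nat.lt_succ_iff_lt_or_eq.mp hkj) with hkj | hkj
    · rw [ih hkj, Limits.comp_zero]
    · obtain rfl : k = ⟨j, h⟩ := Fin.ext hkj
      rw [X.partialNormalizer_comp_σ (j := j) _ le_rfl (h₂ := Nat.le_of_succ_le_succ h),
        ← Category.assoc, oneSubσδ_comp_σ_self, Limits.zero_comp]

theorem δ_comp_partialNormalizer_eq_zero {l j : ℕ} (i : Fin (l + 1)) (hij : i < j)
    {h : j ≤ l + 1} : X.δ i.castSucc ≫ X.partialNormalizer (l + 1) j h = 0 := by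
  induction j with
  | zero => omega
  | succ j ih =>
    rw [partialNormalizer, ← Category.assoc]
    rcases (Nat.lt_succ_iff_lt_or_eq.mp hij) with hij | hij
    · cases l with
      | zero => omega
      | succ l =>
        obtain ⟨j, rfl⟩ : ∃ j', j = j' + 1 := ⟨j - 1, by omega⟩
        rw [show (⟨j + 1, h⟩ : Fin (l + 2)) = Fin.succ ⟨j, by omega⟩ from rfl,
          X.δ_comp_oneSubσδ_succ (Fin.le_def.mpr (by simp; omega)), Category.assoc, ih hij,
          Limits.comp_zero]
    · obtain rfl : i = ⟨j, h⟩ := Fin.ext hij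
      rw [δ_comp_oneSubσδ_self, Limits.zero_comp]

def nonLastCofaceRange (l : ℕ) : Submodule A (X ^⦋l + 1⦌) :=
  ⨆ i : Fin (l + 1), LinearMap.range (X.δ i.castSucc).hom

theorem sub_partialNormalizer_apply_mem {l : ℕ} (j : ℕ) (h : j ≤ l + 1) (x : X ^⦋l + 1⦌) :
    x - X.partialNormalizer (l + 1) j h x ∈ X.nonLastCofaceRange l := by
  induction j generalizing x with
  | zero => exact (sub_self x).symm ▸ zero_mem _
  | succ j ih =>
    rw [partialNormalizer, ModuleCat.comp_apply,
      ← sub_add_sub_cancel x (X.oneSubσδ ⟨j, h⟩ x)]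
    exact add_mem (le_iSup (fun i : Fin (l + 1) => LinearMap.range (X.δ i.castSucc).hom) _
      (X.sub_oneSubσδ_apply_mem_range _ x)) (ih _ _)

/-- The projection of `X^l` onto `N^l(X)` along the images of the non-last cofaces. -/
def normalizer (l : ℕ) : X ^⦋l⦌ ⟶ X ^⦋l⦌ :=
  X.partialNormalizer l l le_rfl

theorem normalizer_apply_of_mem {l : ℕ} {y : X ^⦋l⦌} (hy : y ∈ cosimplicialNormalization X l) :
    X.normalizer l y = y :=
  X.partialNormalizer_apply_of_mem hy l le_rfl

theorem normalizer_apply_mem {l : ℕ} (x : X ^⦋l⦌) :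
    X.normalizer l x ∈ cosimplicialNormalization X l := by
  cases l with
  | zero => simp [cosimplicialNormalization]
  | succ l =>
    refine (X.mem_cosimplicialNormalization_succ_iff _).mpr fun i => ?_
    rw [normalizer, ← ModuleCat.comp_apply, X.partialNormalizer_comp_σ_eq_zero i i.isLt]
    rfl

theorem δ_comp_normalizer_eq_zero {l : ℕ} (i : Fin (l + 1)) :
    X.δ i.castSucc ≫ X.normalizer (l + 1) = 0 :=
  X.δ_comp_partialNormalizer_eq_zero i i.isLt

theorem sub_normalizer_apply_mem {l : ℕ} (x : X ^⦋l + 1⦌) :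
    x - X.normalizer (l + 1) x ∈ X.nonLastCofaceRange l :=
  X.sub_partialNormalizer_apply_mem _ _ x

theorem normalizer_map_eq_zero {k m : ℕ} (h : ⦋k⦌ ⟶ ⦋m⦌)
    (hlast : h.toOrderHom (Fin.last k) = Fin.last m) (hh : ¬ Function.Bijective h.toOrderHom)
    {y : X ^⦋k⦌} (hy : y ∈ cosimplicialNormalization X k) : X.normalizer m (X.map h y) = 0 := by
  by_cases hinj : Function.Injective h.toOrderHom
  · have hsurj : ¬ Function.Surjective h.toOrderHom := fun hs => hh ⟨hinj, hs⟩
    cases m with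
    | zero => exact absurd (fun _ => ⟨Fin.last k, Subsingleton.elim (α := Fin 1) _ _⟩) hsurj
    | succ m =>
      obtain ⟨i, θ, rfl⟩ := SimplexCategory.eq_comp_δ_of_not_surjective h hsurj
      obtain ⟨i, rfl⟩ : ∃ i', Fin.castSucc i' = i := Fin.exists_castSucc_eq.mpr fun hi => by
        subst hi
        exact Fin.succAbove_ne _ _ hlast
      rw [X.map_comp, ModuleCat.comp_apply, ← ModuleCat.comp_apply]
      exact congrArg (fun φ => φ (X.map θ y)) (X.δ_comp_normalizer_eq_zero i)
  · rw [X.map_eq_zero_of_not_injective hy h hinj, map_zero]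

/-- The summand `f_*(N^m(X))` of `X^n`, for `f : [m] → [n]` in `Λ`. -/
def lambdaSummand {n : ℕ} (p : LambdaIndex n) :
    Submodule A (X ^⦋n⦌) :=
  Submodule.map (X.map p.2.1).hom (cosimplicialNormalization X p.1)

theorem map_δ_lambdaSummand {l : ℕ} (p : LambdaIndex l)
    (i : Fin (l + 1)) :
    (X.lambdaSummand p).map (X.δ i.castSucc).hom = X.lambdaSummand
      ⟨p.1, p.2.1 ≫ SimplexCategory.δ i.castSucc, p.2.2.comp _ _ (Fin.castSucc_lt_last i).ne⟩ := by
  rw [lambdaSummand, lambdaSummand, ← Submodule.map_comp, ← ModuleCat.hom_comp, X.map_comp]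
  rfl

theorem iSup_lambdaSummand_eq_top (n : ℕ) : ⨆ p : LambdaIndex n, X.lambdaSummand p = ⊤ := by
  have hid (n : ℕ) (x : X ^⦋n⦌) : X.normalizer n x ∈ ⨆ p : LambdaIndex n, X.lambdaSummand p := by
    refine Submodule.mem_iSup_of_mem ⟨n, 𝟙 _, .id n⟩ ⟨_, X.normalizer_apply_mem x, ?_⟩
    rw [X.map_id]
    rfl
  induction n with
  | zero => exact eq_top_iff.mpr fun x _ => hid 0 x
  | succ l ih =>
    have hfaces : X.nonLastCofaceRange l ≤ ⨆ p : LambdaIndex (l + 1), X.lambdaSummand p := by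
      refine iSup_le fun i => ?_
      rw [LinearMap.range_eq_map, ← ih, Submodule.map_iSup]
      exact iSup_le fun p => (X.map_δ_lambdaSummand p i).le.trans (le_iSup _ _)
    refine eq_top_iff.mpr fun x _ => ?_
    rw [← add_sub_cancel (X.normalizer (l + 1) x) x]
    exact add_mem (hid _ x) (hfaces (X.sub_normalizer_apply_mem x))

def lambdaRetraction {n : ℕ} (q : LambdaIndex n) :
    X ^⦋n⦌ ⟶ X ^⦋q.1⦌ :=
  X.map (lowerAdjoint q.2.1 q.2.2.map_last) ≫ X.normalizer q.1

theorem lambdaRetraction_map {n : ℕ} (q : LambdaIndex n)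
    {y : X ^⦋q.1⦌} (hy : y ∈ cosimplicialNormalization X q.1) :
    X.lambdaRetraction q (X.map q.2.1 y) = y := by
  rw [lambdaRetraction, ← ModuleCat.comp_apply (X.map _), ← Category.assoc, ← X.map_comp,
    SimplexCategory.comp_lowerAdjoint _ q.2.2.strictMono, X.map_id, Category.id_comp,
    X.normalizer_apply_of_mem hy]

theorem lambdaRetraction_eq_zero {n : ℕ} {p q : LambdaIndex n}
    (hpq : p ≠ q) (hw : vertexSum q.2.1 ≤ vertexSum p.2.1) {v : X ^⦋n⦌}
    (hv : v ∈ X.lambdaSummand p) : X.lambdaRetraction q v = 0 := by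
  obtain ⟨m, f, hf⟩ := q
  obtain ⟨k, g, hg⟩ := p
  obtain ⟨y, hy, rfl⟩ := hv
  rw [lambdaRetraction, ← ModuleCat.comp_apply (X.map _), ← Category.assoc, ← X.map_comp,
    ModuleCat.comp_apply]
  refine X.normalizer_map_eq_zero _ ?_ (fun hbij => ?_) hy
  · exact (congrArg _ hg.map_last).trans
      (SimplexCategory.lowerAdjoint_last hf.map_last hf.strictMono)
  · obtain rfl : k = m := by
      simpa using Fintype.card_congr (Equiv.ofBijective _ hbij)
    have := SimplexCategory.isIso_of_bijective hbij
    obtain rfl := SimplexCategory.eq_of_comp_lowerAdjoint_eq_id hf.map_last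
      (SimplexCategory.eq_id_of_isIso _) hw
    exact hpq rfl

theorem iSupIndep_lambdaSummand (n : ℕ) : iSupIndep (X.lambdaSummand (n := n)) := by
  refine iSupIndep_of_triangular _ (fun p => vertexSum p.2.1) (fun q => (X.lambdaRetraction q).hom)
    (fun q v hv hv0 => ?_) fun q p hqp hw _ hv => X.lambdaRetraction_eq_zero (Ne.symm hqp) hw hv
  obtain ⟨y, hy, rfl⟩ := hv
  rw [← X.lambdaRetraction_map q hy]
  exact (congrArg _ hv0).trans (map_zero _)

end CategoryTheory.CosimplicialObject

open scoped Classical in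
theorem cosimplicial_module_lambda_decomposition_general
    (A : Type) [CommRing A]
    (X : CosimplicialObject (ModuleCat A)) (n : ℕ) :
    DirectSum.IsInternal
      (fun p : (Σ m : ℕ, {f : SimplexCategory.mk m ⟶ SimplexCategory.mk n // IsLambdaHom f}) =>
        Submodule.map (X.map p.2.1).hom (cosimplicialNormalization X p.1)) :=
  DirectSum.isInternal_submodule_of_iSupIndep_of_iSup_eq_top (X.iSupIndep_lambdaSummand n)
    (X.iSup_lambdaSummand_eq_top n)

open scoped Classical in
theorem cosimplicial_module_lambda_decomposition
    (A : Type) [CommRing A] [Algebra ℚ A]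
    (X : CosimplicialObject (ModuleCat A)) (n : ℕ) :
    DirectSum.IsInternal
      (fun p : (Σ m : ℕ, {f : SimplexCategory.mk m ⟶ SimplexCategory.mk n // IsLambdaHom f}) =>
        Submodule.map (X.map p.2.1).hom (cosimplicialNormalization X p.1)) :=
  cosimplicial_module_lambda_decomposition_general A X n
end

section
/- Let X be a cosimplicial A-module over a ring A, n ≥ 1, I ⊊ [0, n] a proper subset, and y^i ∈ X^{n−1} for i ∈ I. The system of equations σ^i(x) = y^i (i ∈ I) has a solution x ∈ X^n if and only if the y^i satisfy the compatibilities σ^{j−1}(y^i) = σ^i(y^j) for all i < j in I. -/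
open CategoryTheory

/-!
Necessity is the cosimplicial identity `σ^{j-1} σ^i = σ^i σ^j` for `i < j`. For sufficiency, solve
the equations one index at a time in increasing order: if `x` solves those with index `< j`, then
`x + δ^{j+1}(y^j - σ^j x)` also solves the `j`-th one, because `σ^j δ^{j+1} = id`, while for
`i < j` the identity `σ^i δ^{j+1} = δ^j σ^i` together with the compatibility of `y^i` and `y^j`
shows that the correction term is killed by `σ^i`.
-/

namespace CategoryTheory.CosimplicialObject

open Simplicial

variable {A : Type*} [Ring A] (X : CosimplicialObject (ModuleCat A)) {n : ℕ}

theorem σ_σ_apply_of_le {i j : Fin (n + 1)} (H : i ≤ j) (x : X ^⦋n + 2⦌) :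
    X.σ j (X.σ i.castSucc x) = X.σ i (X.σ j.succ x) := by
  rw [← ModuleCat.comp_apply, ← ModuleCat.comp_apply, X.σ_comp_σ H]

theorem σ_δ_succ_apply (i : Fin (n + 1)) (x : X ^⦋n⦌) : X.σ i (X.δ i.succ x) = x := by
  rw [← ModuleCat.comp_apply, X.δ_comp_σ_succ, ModuleCat.id_apply]

theorem σ_castSucc_δ_succ_apply {i : Fin (n + 2)} {j : Fin (n + 1)} (H : j.castSucc < i)
    (x : X ^⦋n + 1⦌) : X.σ j.castSucc (X.δ i.succ x) = X.δ i (X.σ j x) := by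
  rw [← ModuleCat.comp_apply, X.δ_comp_σ_of_gt H, ModuleCat.comp_apply]

theorem σ_add_δ_succ_sub_apply (j : Fin (n + 1)) (x : X ^⦋n + 1⦌) (w : X ^⦋n⦌) :
    X.σ j (x + X.δ j.succ (w - X.σ j x)) = w := by
  rw [map_add, X.σ_δ_succ_apply, add_sub_cancel]

theorem σ_castSucc_add_δ_succ_sub_apply {i j : Fin (n + 1)} (H : i ≤ j) (x : X ^⦋n + 2⦌)
    (w : X ^⦋n + 1⦌) (hw : X.σ i w = X.σ j (X.σ i.castSucc x)) :
    X.σ i.castSucc (x + X.δ j.succ.succ (w - X.σ j.succ x)) = X.σ i.castSucc x := by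
  rw [map_add, X.σ_castSucc_δ_succ_apply (Fin.castSucc_lt_succ_iff.2 H), map_sub, hw,
    X.σ_σ_apply_of_le H, sub_self, map_zero, add_zero]

variable {I : Finset (Fin (n + 2))} {y : Fin (n + 2) → X ^⦋n + 1⦌}

theorem exists_σ_eq_of_le_of_forall_lt
    (hy : ∀ i j : Fin (n + 1), i.castSucc ∈ I → j.succ ∈ I → i ≤ j →
      X.σ j (y i.castSucc) = X.σ i (y j.succ))
    (j : Fin (n + 2)) (x : X ^⦋n + 2⦌) (hx : ∀ i ∈ I, i < j → X.σ i x = y i) :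
    ∃ x' : X ^⦋n + 2⦌, ∀ i ∈ I, i ≤ j → X.σ i x' = y i := by
  by_cases hj : j ∈ I
  · refine ⟨x + X.δ j.succ (y j - X.σ j x), fun i hi hij => ?_⟩
    rcases hij.lt_or_eq with hij | rfl
    · obtain ⟨i, rfl⟩ := i.eq_castSucc_of_ne_last (Fin.ne_last_of_lt hij)
      obtain ⟨j, rfl⟩ := j.eq_succ_of_ne_zero (Fin.ne_zero_of_lt hij)
      have hle : i ≤ j := Fin.castSucc_lt_succ_iff.1 hij
      have hyx : X.σ i (y j.succ) = X.σ j (X.σ i.castSucc x) := by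
        rw [hx _ hi hij, hy i j hi hj hle]
      rw [X.σ_castSucc_add_δ_succ_sub_apply hle x _ hyx, hx _ hi hij]
    · exact X.σ_add_δ_succ_sub_apply _ _ _
  · exact ⟨x, fun i hi hij => hx i hi (hij.lt_of_ne (by rintro rfl; exact hj hi))⟩

theorem exists_σ_eq_of_castSucc_lt
    (hy : ∀ i j : Fin (n + 1), i.castSucc ∈ I → j.succ ∈ I → i ≤ j →
      X.σ j (y i.castSucc) = X.σ i (y j.succ))
    (k : Fin (n + 3)) : ∃ x : X ^⦋n + 2⦌, ∀ i ∈ I, i.castSucc < k → X.σ i x = y i := by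
  induction k using Fin.induction with
  | zero => exact ⟨0, fun i _ hi => absurd hi (Fin.not_lt_zero _)⟩
  | succ k ih =>
    obtain ⟨x, hx⟩ := ih
    obtain ⟨x', hx'⟩ := X.exists_σ_eq_of_le_of_forall_lt hy k x
      (fun i hi hik => hx i hi (Fin.castSucc_lt_castSucc_iff.2 hik))
    exact ⟨x', fun i hi hik => hx' i hi (Fin.castSucc_lt_succ_iff.1 hik)⟩

end CategoryTheory.CosimplicialObject

theorem cosimplicial_kan_extension_condition_general
    (A : Type) [CommRing A] (X : CosimplicialObject (ModuleCat A)) (l : ℕ)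
    (I : Finset (Fin (l + 2)))
    (y : Fin (l + 2) → X.obj (SimplexCategory.mk (l + 1))) :
    (∃ x : X.obj (SimplexCategory.mk (l + 2)),
        ∀ i ∈ I, X.map (SimplexCategory.σ i) x = y i) ↔
      (∀ i' j' : Fin (l + 1), i'.castSucc ∈ I → j'.succ ∈ I → i' ≤ j' →
        X.map (SimplexCategory.σ j') (y i'.castSucc) =
          X.map (SimplexCategory.σ i') (y j'.succ)) := by
  constructor
  · rintro ⟨x, hx⟩ i j hi hj hij
    rw [← hx _ hi, ← hx _ hj]
    exact X.σ_σ_apply_of_le hij x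
  · intro hy
    obtain ⟨x, hx⟩ := X.exists_σ_eq_of_castSucc_lt hy (Fin.last _)
    exact ⟨x, fun i hi => hx i hi (Fin.castSucc_lt_last i)⟩

theorem cosimplicial_kan_extension_condition
    (A : Type) [CommRing A] (X : CosimplicialObject (ModuleCat A)) (l : ℕ)
    (I : Finset (Fin (l + 2))) (hI : I ≠ Finset.univ)
    (y : Fin (l + 2) → X.obj (SimplexCategory.mk (l + 1))) :
    (∃ x : X.obj (SimplexCategory.mk (l + 2)),
        ∀ i ∈ I, X.map (SimplexCategory.σ i) x = y i) ↔
      (∀ i' j' : Fin (l + 1), i'.castSucc ∈ I → j'.succ ∈ I → i' ≤ j' →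
        X.map (SimplexCategory.σ j') (y i'.castSucc) =
          X.map (SimplexCategory.σ i') (y j'.succ)) :=
  cosimplicial_kan_extension_condition_general A X l I y
end

section
/- Let X be a cosimplicial A-module and y^i ∈ N^{n−1}(X) for all i ∈ [0, n−1], where N is the normalization. Then there exists x ∈ X^n with σ^i(x) = y^i for all i ∈ [0, n−1]. (In fact one can take x = Σ_i δ^i(z^i) for suitable z^i ∈ N^{n−1}(X) solving z^i + z^{i+1} = y^i.) -/
open CategoryTheory

/-! For normalized `z`, `σʲ δⁱ z` is `z` when `i ∈ {j, j + 1}` and `0` otherwise: in the other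
cases `δⁱ ≫ σʲ` identifies two vertices, so it factors through a codegeneracy. Hence
`x = ∑ᵢ δⁱ zⁱ` satisfies `σʲ x = zʲ + zʲ⁺¹`, and the recursion `zⁿ⁺¹ = 0`, `zʲ = yʲ - zʲ⁺¹`
solves `zʲ + zʲ⁺¹ = yʲ` inside the normalization. -/

theorem Fin.exists_castSucc_add_succ_eq {M S : Type*} [AddGroup M] [SetLike S M]
    [AddSubgroupClass S M] {s : S} {n : ℕ} (y : Fin n → M) (hy : ∀ i, y i ∈ s) :
    ∃ z : Fin (n + 1) → M, (∀ i, z i ∈ s) ∧ ∀ j, z j.castSucc + z j.succ = y j := by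
  let z : Fin (n + 1) → M := Fin.reverseInduction 0 fun j zsucc => y j - zsucc
  refine ⟨z, fun i => ?_, fun j => ?_⟩
  · induction i using Fin.reverseInduction with
    | last => simp [z, zero_mem]
    | cast j ih => simpa [z, Fin.reverseInduction_castSucc] using sub_mem (hy j) ih
  · simp [z, Fin.reverseInduction_castSucc]

open Simplicial

namespace SimplexCategory

theorem not_injective_δ_comp_σ {n : ℕ} {i : Fin (n + 2)} {j : Fin (n + 1)}
    (hi₁ : i ≠ j.castSucc) (hi₂ : i ≠ j.succ) : ¬ Function.Injective (δ i ≫ σ j).toOrderHom := by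
  obtain ⟨a, ha⟩ := Fin.exists_succAbove_eq hi₁.symm
  obtain ⟨b, hb⟩ := Fin.exists_succAbove_eq hi₂.symm
  intro h
  have hab : a = b := h (by simp [δ, σ, ha, hb])
  exact (Fin.castSucc_lt_succ (i := j)).ne (ha.symm.trans (hab ▸ hb))

end SimplexCategory

namespace cosimplicialNormalization

open SimplexCategory

variable {A : Type} [CommRing A] {X : CosimplicialObject (ModuleCat A)}

theorem map_σ_eq_zero {n : ℕ} {z : X.obj ⦋n + 1⦌}
    (hz : z ∈ cosimplicialNormalization X (n + 1)) (j : Fin (n + 1)) : X.map (σ j) z = 0 := by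
  simp only [cosimplicialNormalization, Submodule.mem_iInf] at hz
  exact hz n (σ j) n.lt_succ_self (epi_iff_surjective.mp inferInstance)

theorem map_eq_zero_of_not_injective {n : ℕ} {z : X.obj ⦋n⦌}
    (hz : z ∈ cosimplicialNormalization X n) {Δ' : SimplexCategory} (θ : ⦋n⦌ ⟶ Δ')
    (hθ : ¬ Function.Injective θ.toOrderHom) : X.map θ z = 0 := by
  cases n with
  | zero => exact absurd (fun a b _ => Subsingleton.elim (α := Fin 1) a b) hθ
  | succ n =>
    obtain ⟨j, θ', rfl⟩ := eq_σ_comp_of_not_injective θ hθ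
    rw [X.map_comp, ModuleCat.comp_apply, map_σ_eq_zero hz, map_zero]

theorem map_σ_map_δ_eq_zero {n : ℕ} {z : X.obj ⦋n⦌}
    (hz : z ∈ cosimplicialNormalization X n) {i : Fin (n + 2)} {j : Fin (n + 1)}
    (hi₁ : i ≠ j.castSucc) (hi₂ : i ≠ j.succ) : X.map (σ j) (X.map (δ i) z) = 0 := by
  rw [← ModuleCat.comp_apply, ← X.map_comp]
  exact map_eq_zero_of_not_injective hz _ (not_injective_δ_comp_σ hi₁ hi₂)

end cosimplicialNormalization

theorem surjectivity_onto_normalized_codegeneracy_data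
    (A : Type) [CommRing A] (X : CosimplicialObject (ModuleCat A)) (n : ℕ)
    (y : Fin (n + 1) → X.obj (SimplexCategory.mk n))
    (hy : ∀ i, y i ∈ cosimplicialNormalization X n) :
    ∃ x : X.obj (SimplexCategory.mk (n + 1)),
      ∀ i : Fin (n + 1), X.map (SimplexCategory.σ i) x = y i := by
  obtain ⟨z, hz, hzy⟩ := Fin.exists_castSucc_add_succ_eq y hy
  refine ⟨∑ i, X.map (SimplexCategory.δ i) (z i), fun j => ?_⟩
  rw [map_sum, Fintype.sum_eq_add _ _ (Fin.castSucc_lt_succ (i := j)).ne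
    fun i hi => cosimplicialNormalization.map_σ_map_δ_eq_zero (hz i) hi.1 hi.2, ← hzy j]
  simp only [← ModuleCat.comp_apply, ← X.map_comp, SimplexCategory.δ_comp_σ_self,
    SimplexCategory.δ_comp_σ_succ, X.map_id, ModuleCat.id_apply]
end
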